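/- Let k and l be positive integers with 2k + l divisible by 3, and let f := φ' be the derivative of φ. Then f satisfies f'''(x) + f'(x) + i·λ·f(x) = 0 for every x ∈ ℝ, f(0) = f(L) = 0, and f'(0) = f'(L) = 3·k·(k+l)/n, which is a nonzero real number (that is, φ''(0) = φ''(L) = 3k(k+l)/(k²+kl+l²) ≠ 0). -/

import Mathlib

noncomputable section

/-- `n = k² + k·l + l²` as a real number. -/
def nR (k l : ℕ) : ℝ := ((k ^ 2 + k * l + l ^ 2 : ℕ) : ℝ)

/-- The critical length `L = 2π√(n/3)`. -/
def LL (k l : ℕ) : ℝ := 2 * Real.pi * Real.sqrt (nR k l / 3)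

/-- `λ = (2k+l)(k−l)(2l+k)/(3√3 n^{3/2})`. -/
def lam (k l : ℕ) : ℝ :=
  ((2 * k + l : ℕ) : ℝ) * ((k : ℝ) - (l : ℝ)) * ((2 * l + k : ℕ) : ℝ) /
    (3 * Real.sqrt 3 * nR k l ^ ((3 : ℝ) / 2))

/-- The Type 1 eigenfunction `φ`. -/
def phi (k l : ℕ) : ℝ → ℂ := fun x =>
  -Complex.exp (Complex.I *
      ((x * (Real.sqrt 3 * ((2 * k + l : ℕ) : ℝ)) / (3 * Real.sqrt (nR k l)) : ℝ) : ℂ))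
  - ((k : ℂ) / (l : ℂ)) * Complex.exp (-(Complex.I *
      ((x * (Real.sqrt 3 * ((k + 2 * l : ℕ) : ℝ)) / (3 * Real.sqrt (nR k l)) : ℝ) : ℂ)))
  + (((k : ℂ) + (l : ℂ)) / (l : ℂ)) * Complex.exp (Complex.I *
      ((x * (Real.sqrt 3 * ((l : ℝ) - (k : ℝ))) / (3 * Real.sqrt (nR k l)) : ℝ) : ℂ))

/-- The Type 2 eigenfunction `φ̃`. -/
def phiT (k l : ℕ) : ℝ → ℂ := fun x =>
  Complex.exp (Complex.I *
      ((x * (Real.sqrt 3 * ((2 * k + l : ℕ) : ℝ)) / (3 * Real.sqrt (nR k l)) : ℝ) : ℂ))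
  - Complex.exp (-(Complex.I *
      ((x * (Real.sqrt 3 * ((k + 2 * l : ℕ) : ℝ)) / (3 * Real.sqrt (nR k l)) : ℝ) : ℂ)))

end

/-!
Write `φ = ∑ⱼ cⱼ e^{i rⱼ x}` with `rⱼ = mⱼ / √(3n)`, where `m = (2k+l, -(k+2l), l-k)` are the
three roots of `X³ - 3nX - (2k+l)(k-l)(2l+k)`. Then every `rⱼ` solves `r³ - r = λ`, which is
exactly the condition for `e^{i r x}` to solve `y''' + y' + iλy = 0`; and `f = φ'` is again such a
combination. If `3 ∣ 2k+l`, then `3` divides every `mⱼ`, and `rⱼ L = 2π mⱼ / 3` makes every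
exponential `L`-periodic, so the boundary values at `L` are those at `0`, which are finite sums.
-/

open Complex Finset

noncomputable section

section ExpSum

variable {ι : Type*} [Fintype ι] (c : ι → ℂ) (r : ι → ℝ)

def expSum (x : ℝ) : ℂ := ∑ i, c i * exp (I * r i * x)

theorem hasDerivAt_exp_I_mul (ρ x : ℝ) :
    HasDerivAt (fun y : ℝ => exp (I * ρ * y)) (I * ρ * exp (I * ρ * x)) x := by
  have h := ((hasDerivAt_id (x : ℂ)).const_mul (I * ρ)).cexp
  simpa [mul_comm] using h.comp_ofReal

theorem deriv_expSum : deriv (expSum c r) = expSum (fun i => c i * (I * r i)) r := by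
  funext x
  have h : HasDerivAt (expSum c r) (∑ i, c i * (I * r i * exp (I * r i * x))) x :=
    HasDerivAt.fun_sum fun i _ => (hasDerivAt_exp_I_mul (r i) x).const_mul (c i)
  rw [h.deriv, expSum]
  exact sum_congr rfl fun i _ => by ring

theorem expSum_zero : expSum c r 0 = ∑ i, c i := by
  simp [expSum]

theorem expSum_eq_expSum_zero {x : ℝ} (h : ∀ i, ∃ z : ℤ, r i * x = z * (2 * Real.pi)) :
    expSum c r x = expSum c r 0 := by
  rw [expSum_zero, expSum]
  refine sum_congr rfl fun i _ => ?_
  obtain ⟨z, hz⟩ := h i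
  have hexp : I * r i * x = z * (2 * Real.pi * I) := by
    rw [mul_assoc, ← ofReal_mul, hz]
    push_cast
    ring
  rw [hexp, exp_int_mul_two_pi_mul_I, mul_one]

theorem expSum_ode {a : ℝ} (hr : ∀ i, r i ^ 3 - r i = a) (x : ℝ) :
    deriv (deriv (deriv (expSum c r))) x + deriv (expSum c r) x + I * a * expSum c r x = 0 := by
  simp only [deriv_expSum, expSum, ← sum_add_distrib, mul_sum]
  refine sum_eq_zero fun i _ => ?_
  rw [← hr i]
  push_cast
  linear_combination (c i * I * r i ^ 3 * exp (I * r i * x)) * I_sq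

end ExpSum

section Phi

variable (k l : ℕ)

def phiScale : ℝ := Real.sqrt 3 / (3 * Real.sqrt (nR k l))

def phiNum : Fin 3 → ℤ := ![2 * k + l, -(k + 2 * l), l - k]

def phiFreq (j : Fin 3) : ℝ := phiNum k l j * phiScale k l

def phiCoeff : Fin 3 → ℂ := ![-1, -(k / l), (k + l) / l]

theorem phi_eq_expSum : phi k l = expSum (phiCoeff k l) (phiFreq k l) := by
  funext x
  have hE : ∀ m : ℝ,
      x * (Real.sqrt 3 * m) / (3 * Real.sqrt (nR k l)) = m * phiScale k l * x := by
    intro m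
    unfold phiScale
    ring
  simp only [phi, hE, expSum, Fin.sum_univ_three, phiCoeff, phiFreq, phiNum]
  push_cast
  ring_nf

theorem phiNum_cube_sub (j : Fin 3) :
    (phiNum k l j : ℝ) ^ 3 - 3 * nR k l * phiNum k l j
      = (2 * k + l) * (k - l) * (2 * l + k) := by
  unfold nR
  fin_cases j <;>
  simp only [phiNum, Fin.zero_eta, Fin.mk_one, Fin.reduceFinMk, Matrix.cons_val_zero,
    Matrix.cons_val_one, Matrix.cons_val] <;>
  push_cast <;> ring

variable {l}

theorem nR_pos (hl : 0 < l) : 0 < nR k l := by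
  unfold nR
  positivity

theorem phiScale_sq_mul (hl : 0 < l) : phiScale k l ^ 2 * (3 * nR k l) = 1 := by
  have hn := nR_pos k hl
  unfold phiScale
  rw [div_pow, mul_pow, Real.sq_sqrt (by norm_num), Real.sq_sqrt hn.le]
  field_simp

theorem lam_eq (hl : 0 < l) :
    lam k l = phiScale k l ^ 3 * ((2 * k + l) * (k - l) * (2 * l + k)) := by
  have hn := nR_pos k hl
  have h32 : nR k l ^ ((3 : ℝ) / 2) = nR k l * Real.sqrt (nR k l) := by
    rw [show (3 : ℝ) / 2 = 1 + 1 / 2 by norm_num, Real.rpow_add hn, Real.rpow_one,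
      Real.sqrt_eq_rpow]
  have hs3 : Real.sqrt 3 ^ 2 = 3 := Real.sq_sqrt (by norm_num)
  have hsn : Real.sqrt (nR k l) ^ 2 = nR k l := Real.sq_sqrt hn.le
  unfold lam phiScale
  rw [h32]
  push_cast
  field_simp
  linear_combination
    (9 * ((k : ℝ) - l)) * hsn - ((k - l) * nR k l * (Real.sqrt 3 ^ 2 + 3)) * hs3

theorem phiFreq_cube_sub (hl : 0 < l) (j : Fin 3) :
    phiFreq k l j ^ 3 - phiFreq k l j = lam k l := by
  rw [lam_eq k hl, ← phiNum_cube_sub k l j, phiFreq]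
  linear_combination ((phiNum k l j : ℝ) * phiScale k l) * phiScale_sq_mul k hl

theorem phiScale_mul_LL (hl : 0 < l) : phiScale k l * LL k l = 2 * Real.pi / 3 := by
  have hn := nR_pos k hl
  have h : Real.sqrt 3 * Real.sqrt (nR k l / 3) = Real.sqrt (nR k l) := by
    rw [← Real.sqrt_mul (by norm_num)]
    congr 1
    ring
  unfold phiScale LL
  field_simp
  linear_combination h

theorem three_dvd_phiNum (h3 : 3 ∣ 2 * k + l) (j : Fin 3) : 3 ∣ phiNum k l j := by
  have h3' : (3 : ℤ) ∣ 2 * k + l := by exact_mod_cast h3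
  fin_cases j <;>
  simp only [phiNum, Fin.zero_eta, Fin.mk_one, Fin.reduceFinMk, Matrix.cons_val_zero,
    Matrix.cons_val_one, Matrix.cons_val] <;>
  omega

theorem phiFreq_mul_LL (hl : 0 < l) (h3 : 3 ∣ 2 * k + l) (j : Fin 3) :
    ∃ z : ℤ, phiFreq k l j * LL k l = z * (2 * Real.pi) := by
  obtain ⟨z, hz⟩ := three_dvd_phiNum k h3 j
  refine ⟨z, ?_⟩
  rw [phiFreq, mul_assoc, phiScale_mul_LL k hl, hz]
  push_cast
  ring

theorem sum_phiCoeff_mul_phiFreq (hl : 0 < l) :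
    ∑ j, phiCoeff k l j * (I * phiFreq k l j) = 0 := by
  have hl' : (l : ℂ) ≠ 0 := by exact_mod_cast hl.ne'
  simp only [Fin.sum_univ_three, phiCoeff, phiFreq, phiNum, Matrix.cons_val_zero,
    Matrix.cons_val_one, Matrix.cons_val]
  push_cast
  field_simp
  ring

theorem sum_phiCoeff_mul_phiFreq_sq (hl : 0 < l) :
    ∑ j, phiCoeff k l j * (I * phiFreq k l j) * (I * phiFreq k l j)
      = ((3 * (k : ℝ) * ((k : ℝ) + (l : ℝ)) / nR k l : ℝ) : ℂ) := by
  have hl' : (l : ℂ) ≠ 0 := by exact_mod_cast hl.ne'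
  have hn : (nR k l : ℂ) ≠ 0 := by exact_mod_cast (nR_pos k hl).ne'
  have ha : ((phiScale k l : ℝ) : ℂ) ^ 2 * (3 * nR k l) = 1 := by
    exact_mod_cast phiScale_sq_mul k hl
  simp only [Fin.sum_univ_three, phiCoeff, phiFreq, phiNum, Matrix.cons_val_zero,
    Matrix.cons_val_one, Matrix.cons_val]
  push_cast
  field_simp
  linear_combination
    ((phiScale k l : ℂ) ^ 2 * nR k l
      * (-(l * (2 * k + l) ^ 2) - k * (k + 2 * l) ^ 2 + (k + l) * (l - k) ^ 2)) * I_sq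
    + (3 * k * l * (k + l)) * ha

end Phi

end

theorem stmt_8 (k l : ℕ) (hk : 0 < k) (hl : 0 < l) (h3 : 3 ∣ 2 * k + l) :
    (∀ x : ℝ, deriv (deriv (deriv (deriv (phi k l)))) x + deriv (deriv (phi k l)) x
        + Complex.I * ((lam k l : ℝ) : ℂ) * deriv (phi k l) x = 0) ∧
    deriv (phi k l) 0 = 0 ∧ deriv (phi k l) (LL k l) = 0 ∧
    deriv (deriv (phi k l)) 0 = ((3 * (k : ℝ) * ((k : ℝ) + (l : ℝ)) / nR k l : ℝ) : ℂ) ∧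
    deriv (deriv (phi k l)) (LL k l) = ((3 * (k : ℝ) * ((k : ℝ) + (l : ℝ)) / nR k l : ℝ) : ℂ) ∧
    ((3 * (k : ℝ) * ((k : ℝ) + (l : ℝ)) / nR k l : ℝ) : ℂ) ≠ 0 := by
  have hφ' : deriv (phi k l)
      = expSum (fun j => phiCoeff k l j * (I * phiFreq k l j)) (phiFreq k l) := by
    rw [phi_eq_expSum, deriv_expSum]
  have hL := phiFreq_mul_LL k hl h3
  rw [hφ']
  refine ⟨expSum_ode _ _ (phiFreq_cube_sub k hl), ?_, ?_, ?_, ?_, ?_⟩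
  · rw [expSum_zero, sum_phiCoeff_mul_phiFreq k hl]
  · rw [expSum_eq_expSum_zero _ _ hL, expSum_zero, sum_phiCoeff_mul_phiFreq k hl]
  · rw [deriv_expSum, expSum_zero, sum_phiCoeff_mul_phiFreq_sq k hl]
  · rw [deriv_expSum, expSum_eq_expSum_zero _ _ hL, expSum_zero,
      sum_phiCoeff_mul_phiFreq_sq k hl]
  · have hn := nR_pos k hl
    exact_mod_cast (by positivity : 0 < 3 * (k : ℝ) * ((k : ℝ) + (l : ℝ)) / nR k l).ne'
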